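/- Let N ≥ 3 be an odd integer and a ≥ 0. Then ∫_{-a}^{a} [ √(N/(2π)) · Q(N-1, N x²) + (N^{N/2}/(2^{N/2} Γ(N/2))) · e^{-N x²/2} |x|^{N-1} · P((N-1)/2, N x²/2) ] dx = (1/√2) Σ_{k=0}^{N-2} ((2k-1)!!/(2k)!!) · P(k+1/2, N a²) + P(N/2, N a²/2) - (1/(2^{N/2} (N-2)!!)) Σ_{k=0}^{(N-3)/2} ((N+2k-2)!!/(2^k (2k)!!)) · P(N/2 + k, N a²). (The integrand is the density of real eigenvalues of the real Ginibre ensemble; the integral is the expected number of real eigenvalues in (-a,a).) -/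

import Mathlib

open MeasureTheory Real Filter

/-- The lower incomplete gamma function `γ(n,x) = ∫₀^x t^(n-1) e^(-t) dt`. -/
noncomputable def lowGamma (n x : ℝ) : ℝ := ∫ t in (0:ℝ)..x, t ^ (n - 1) * Real.exp (-t)

/-- The regularized lower incomplete gamma function `P(n,x) = γ(n,x)/Γ(n)`. -/
noncomputable def regP (n x : ℝ) : ℝ := (Real.Gamma n)⁻¹ * lowGamma n x

/-- The regularized upper incomplete gamma function `Q(n,x) = 1 - P(n,x)`. -/
noncomputable def regQ (n x : ℝ) : ℝ := 1 - regP n x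

/-!
Both sides vanish at `a = 0` and the integrand is even, so it suffices that the derivative of the
right-hand side at `a > 0` is twice the integrand. For odd `N` the orders `N - 1` and `(N - 1) / 2`
are integers, so `Q(N - 1, y)` and `P((N - 1) / 2, y)` are `e^{-y}` times truncated exponential
series. Differentiating the right-hand side term by term, with
`Γ(k + 1/2) = (2k-1)!! √π / 2^k` and `Γ(N/2 + k) 2^k (N-2)!! = Γ(N/2) (N+2k-2)!!`,
produces exactly these series.
-/

open intervalIntegral Finset
open scoped Nat

theorem integral_symm_interval_of_even {f : ℝ → ℝ} {a : ℝ} (heven : ∀ x, f (-x) = f x)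
    (hf : IntervalIntegrable f volume (-a) a) :
    ∫ x in (-a)..a, f x = 2 * ∫ x in (0:ℝ)..a, f x := by
  have hleft : ∫ x in (-a)..0, f x = ∫ x in (0:ℝ)..a, f x := by
    simpa [heven] using (integral_comp_neg (a := 0) (b := a) f).symm
  have hzero : (0 : ℝ) ∈ Set.uIcc (-a) a := by
    rcases le_total 0 a with h | h <;> simp [h]
  rw [← integral_add_adjacent_intervals
    (hf.mono_set (Set.uIcc_subset_uIcc Set.left_mem_uIcc hzero))
    (hf.mono_set (Set.uIcc_subset_uIcc hzero Set.right_mem_uIcc)), hleft, two_mul]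

section IncompleteGamma

variable {s : ℝ}

theorem intervalIntegrable_rpow_sub_one_mul_exp_neg (hs : 0 < s) (x y : ℝ) :
    IntervalIntegrable (fun t => t ^ (s - 1) * exp (-t)) volume x y :=
  (intervalIntegrable_rpow' (by linarith)).mul_continuousOn (by fun_prop)

@[fun_prop]
theorem continuous_regP (hs : 0 < s) : Continuous (regP s) :=
  continuous_const.mul (continuous_primitive (intervalIntegrable_rpow_sub_one_mul_exp_neg hs) 0)

theorem regP_zero (s : ℝ) : regP s 0 = 0 := by simp [regP, lowGamma]

theorem hasDerivAt_lowGamma {x : ℝ} (hs : 0 < s) (hx : 0 < x) :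
    HasDerivAt (lowGamma s) (x ^ (s - 1) * exp (-x)) x := by
  have hmeas : Measurable fun t : ℝ => t ^ (s - 1) * exp (-t) := by fun_prop
  exact integral_hasDerivAt_right (intervalIntegrable_rpow_sub_one_mul_exp_neg hs 0 x)
    hmeas.stronglyMeasurable.stronglyMeasurableAtFilter
    ((continuousAt_rpow_const _ _ (.inl hx.ne')).mul (by fun_prop))

theorem hasDerivAt_regP_mul_sq {c b : ℝ} (hs : 0 < s) (hc : 0 < c) (hb : 0 < b) :
    HasDerivAt (fun b => regP s (c * b ^ 2))
      (2 * (c * b ^ 2) ^ s * exp (-(c * b ^ 2)) / (Gamma s * b)) b := by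
  have hcb : 0 < c * b ^ 2 := by positivity
  have hchain := (hasDerivAt_lowGamma hs hcb).comp b ((hasDerivAt_pow 2 b).const_mul c)
  refine (hchain.const_mul (Gamma s)⁻¹).congr_deriv ?_
  rw [rpow_sub_one hcb.ne']
  field_simp
  ring

end IncompleteGamma

theorem hasDerivAt_exp_neg_mul_sum_pow_div_factorial (k : ℕ) (t : ℝ) :
    HasDerivAt (fun t => exp (-t) * ∑ j ∈ range (k + 1), t ^ j / j !)
      (-(exp (-t) * (t ^ k / k !))) t := by
  induction k with
  | zero => simpa using (hasDerivAt_neg t).exp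
  | succ k ih =>
    simp only [sum_range_succ _ (k + 1), mul_add]
    have hlast := (hasDerivAt_neg t).exp.mul ((hasDerivAt_pow (k + 1) t).div_const ((k + 1)! : ℝ))
    refine (ih.add hlast).congr_deriv ?_
    push_cast [Nat.factorial_succ]
    field_simp
    ring

theorem regP_natCast_add_one (k : ℕ) (x : ℝ) :
    regP (k + 1) x = 1 - exp (-x) * ∑ j ∈ range (k + 1), x ^ j / j ! := by
  have hprimitive : ∫ t in (0 : ℝ)..x, t ^ k / k ! * exp (-t)
      = 1 - exp (-x) * ∑ j ∈ range (k + 1), x ^ j / j ! := by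
    have hderiv : ∀ t, HasDerivAt (fun t => -(exp (-t) * ∑ j ∈ range (k + 1), t ^ j / j !))
        (t ^ k / k ! * exp (-t)) t :=
      fun t => (hasDerivAt_exp_neg_mul_sum_pow_div_factorial k t).neg.congr_deriv (by ring)
    rw [integral_eq_sub_of_hasDerivAt (fun t _ => hderiv t)
      (by apply Continuous.intervalIntegrable; fun_prop)]
    simp [sum_range_succ']
    ring
  rw [regP, lowGamma, Gamma_nat_eq_factorial, add_sub_cancel_right, ← hprimitive,
    ← intervalIntegral.integral_const_mul]
  congr 1 with t
  rw [rpow_natCast]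
  field_simp

theorem regQ_natCast_add_one (k : ℕ) (x : ℝ) :
    regQ (k + 1) x = exp (-x) * ∑ j ∈ range (k + 1), x ^ j / j ! := by
  rw [regQ, regP_natCast_add_one, sub_sub_cancel]

theorem Gamma_half_add_nat_mul_doubleFactorial {N : ℕ} (hN : 2 ≤ N) (k : ℕ) :
    Gamma ((N : ℝ) / 2 + k) * (2 ^ k * (N - 2)‼)
      = Gamma ((N : ℝ) / 2) * (N + 2 * k - 2)‼ := by
  induction k with
  | zero => simp
  | succ k ih =>
    rw [show N + 2 * (k + 1) - 2 = N + 2 * k - 2 + 2 by omega, Nat.doubleFactorial_add_two,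
      Nat.cast_succ, ← add_assoc, Gamma_add_one (by positivity),
      show N + 2 * k - 2 + 2 = N + 2 * k by omega]
    push_cast
    linear_combination ((N : ℝ) + 2 * k) * ih

theorem hasDerivAt_doubleFactorial_div_mul_regP_nat_add_half {c b : ℝ} (hc : 0 < c) (hb : 0 < b)
    (k : ℕ) :
    HasDerivAt (fun b => ((2 * k - 1)‼ : ℝ) / (2 * k)‼ * regP (k + 1 / 2) (c * b ^ 2))
      (2 * √(c / π) * (exp (-(c * b ^ 2)) * ((c * b ^ 2) ^ k / k !))) b := by
  refine ((hasDerivAt_regP_mul_sq (by positivity) hc hb).const_mul _).congr_deriv ?_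
  rw [Gamma_nat_add_half, Nat.doubleFactorial_two_mul, rpow_add (by positivity), rpow_natCast,
    ← sqrt_eq_rpow, sqrt_mul hc.le, sqrt_sq hb.le, sqrt_div hc.le]
  push_cast
  field_simp

theorem hasDerivAt_sum_regP_nat_add_half {c b : ℝ} (hc : 0 < c) (hb : 0 < b) (n : ℕ) :
    HasDerivAt (fun b => 1 / √2 *
        ∑ k ∈ range n, ((2 * k - 1)‼ : ℝ) / (2 * k)‼ * regP (k + 1 / 2) (c * b ^ 2))
      (2 * √(c / (2 * π)) * (exp (-(c * b ^ 2)) * ∑ k ∈ range n, (c * b ^ 2) ^ k / k !))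
      b := by
  refine ((HasDerivAt.fun_sum fun k _ =>
    hasDerivAt_doubleFactorial_div_mul_regP_nat_add_half hc hb k).const_mul _).congr_deriv ?_
  rw [← mul_sum, ← mul_sum, sqrt_div hc.le, sqrt_div hc.le, sqrt_mul zero_le_two]
  field_simp

noncomputable def ginOEConst (N : ℕ) : ℝ :=
  (N : ℝ) ^ ((N : ℝ) / 2) / ((2 : ℝ) ^ ((N : ℝ) / 2) * Gamma (N / 2))

noncomputable def ginOEDensity (N : ℕ) (x : ℝ) : ℝ :=
  √(N / (2 * π)) * regQ (N - 1) (N * x ^ 2)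
    + ginOEConst N * exp (-(N * x ^ 2) / 2) * |x| ^ (N - 1) * regP ((N - 1) / 2) (N * x ^ 2 / 2)

noncomputable def ginOEExpectedCount (N : ℕ) (a : ℝ) : ℝ :=
  1 / √2 * ∑ k ∈ range (N - 1),
      ((2 * k - 1)‼ : ℝ) / (2 * k)‼ * regP (k + 1 / 2) (N * a ^ 2)
    + regP ((N : ℝ) / 2) (N * a ^ 2 / 2)
    - 1 / ((2 : ℝ) ^ ((N : ℝ) / 2) * (N - 2)‼) * ∑ k ∈ range ((N - 3) / 2 + 1),
        (N + 2 * k - 2)‼ / ((2 : ℝ) ^ k * (2 * k)‼) * regP ((N : ℝ) / 2 + k) (N * a ^ 2)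

theorem hasDerivAt_regP_half_natCast_mul_sq_div_two {N : ℕ} (hN : 0 < N) {b : ℝ} (hb : 0 < b) :
    HasDerivAt (fun b => regP ((N : ℝ) / 2) (N * b ^ 2 / 2))
      (2 * ginOEConst N * exp (-(N * b ^ 2) / 2) * b ^ (N - 1)) b := by
  have hderiv := hasDerivAt_regP_mul_sq (s := (N : ℝ) / 2) (c := (N : ℝ) / 2)
    (by positivity) (by positivity) hb
  simp only [← mul_div_right_comm] at hderiv
  refine hderiv.congr_deriv ?_
  unfold ginOEConst
  have hpow : b ^ N = b ^ (N - 1) * b := by rw [← pow_succ, Nat.sub_add_cancel hN]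
  rw [div_rpow (by positivity) zero_le_two, mul_rpow (by positivity) (by positivity),
    rpow_div_two_eq_sqrt (x := b ^ 2) _ (by positivity), sqrt_sq hb.le, rpow_natCast, hpow,
    neg_div]
  field_simp

theorem hasDerivAt_mul_regP_half_add_nat {N : ℕ} (hN : 2 ≤ N) {b : ℝ} (hb : 0 < b) (k : ℕ) :
    HasDerivAt (fun b => 1 / ((2 : ℝ) ^ ((N : ℝ) / 2) * (N - 2)‼) *
        ((N + 2 * k - 2)‼ / ((2 : ℝ) ^ k * (2 * k)‼) * regP ((N : ℝ) / 2 + k) (N * b ^ 2)))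
      (2 * ginOEConst N * exp (-(N * b ^ 2) / 2) * b ^ (N - 1)
        * (exp (-(N * b ^ 2) / 2) * ((N * b ^ 2 / 2) ^ k / k !))) b := by
  have hNpos : (0 : ℝ) < N := by positivity
  unfold ginOEConst
  have hderiv := hasDerivAt_regP_mul_sq (s := (N : ℝ) / 2 + k) (by positivity) hNpos hb
  refine ((hderiv.const_mul _).const_mul _).congr_deriv ?_
  have hGamma : Gamma ((N : ℝ) / 2 + k)
      = Gamma ((N : ℝ) / 2) * (N + 2 * k - 2)‼ / (2 ^ k * (N - 2)‼) :=
    eq_div_of_mul_eq (by positivity) (Gamma_half_add_nat_mul_doubleFactorial hN k)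
  have hexp : exp (-(N * b ^ 2)) = exp (-(N * b ^ 2) / 2) * exp (-(N * b ^ 2) / 2) := by
    rw [← exp_add]; ring_nf
  have hpow : b ^ N = b ^ (N - 1) * b := by rw [← pow_succ, Nat.sub_add_cancel (by omega)]
  rw [mul_rpow hNpos.le (by positivity), rpow_add hNpos, rpow_add (by positivity),
    rpow_natCast, rpow_natCast, rpow_div_two_eq_sqrt (x := b ^ 2) _ (by positivity),
    sqrt_sq hb.le, rpow_natCast, hpow, hexp, hGamma, Nat.doubleFactorial_two_mul, div_pow,
    mul_pow, ← pow_mul]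
  have : 0 < Gamma ((N : ℝ) / 2) := Gamma_pos_of_pos (by positivity)
  push_cast
  field_simp

theorem hasDerivAt_sum_regP_half_add_nat {N : ℕ} (hN : 2 ≤ N) {b : ℝ} (hb : 0 < b) (n : ℕ) :
    HasDerivAt (fun b => 1 / ((2 : ℝ) ^ ((N : ℝ) / 2) * (N - 2)‼) *
        ∑ k ∈ range n,
          (N + 2 * k - 2)‼ / ((2 : ℝ) ^ k * (2 * k)‼) * regP ((N : ℝ) / 2 + k) (N * b ^ 2))
      (2 * ginOEConst N * exp (-(N * b ^ 2) / 2) * b ^ (N - 1)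
        * (exp (-(N * b ^ 2) / 2) * ∑ k ∈ range n, (N * b ^ 2 / 2) ^ k / k !)) b := by
  simp only [mul_sum]
  exact HasDerivAt.fun_sum fun k _ => hasDerivAt_mul_regP_half_add_nat hN hb k

theorem ginOEDensity_neg (N : ℕ) (x : ℝ) : ginOEDensity N (-x) = ginOEDensity N x := by
  simp only [ginOEDensity, neg_sq, abs_neg]

theorem continuous_ginOEDensity {N : ℕ} (hN : 2 ≤ N) : Continuous (ginOEDensity N) := by
  have : (2 : ℝ) ≤ N := by exact_mod_cast hN
  unfold ginOEDensity regQ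
  fun_prop (disch := linarith)

theorem ginOEDensity_of_odd {N : ℕ} (hN : 3 ≤ N) (hodd : Odd N) (x : ℝ) :
    ginOEDensity N x
      = √(N / (2 * π)) * (exp (-(N * x ^ 2)) * ∑ j ∈ range (N - 1), (N * x ^ 2) ^ j / j !)
        + ginOEConst N * exp (-(N * x ^ 2) / 2) * |x| ^ (N - 1)
          * (1 - exp (-(N * x ^ 2) / 2)
            * ∑ j ∈ range ((N - 3) / 2 + 1), (N * x ^ 2 / 2) ^ j / j !) := by
  have hhalf : (((N - 3) / 2 : ℕ) : ℝ) * 2 + 3 = N := by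
    obtain ⟨t, ht⟩ := hodd
    exact_mod_cast (by omega : (N - 3) / 2 * 2 + 3 = N)
  have hQ : (N : ℝ) - 1 = ((N - 2 : ℕ) : ℝ) + 1 := by rw [Nat.cast_sub (by omega)]; ring
  have hP : ((N : ℝ) - 1) / 2 = (((N - 3) / 2 : ℕ) : ℝ) + 1 := by
    linear_combination -hhalf / 2
  rw [ginOEDensity, hP, hQ, regQ_natCast_add_one, regP_natCast_add_one, neg_div,
    show N - 2 + 1 = N - 1 by omega]

theorem hasDerivAt_ginOEExpectedCount {N : ℕ} (hN : 3 ≤ N) (hodd : Odd N) {b : ℝ}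
    (hb : 0 < b) :
    HasDerivAt (ginOEExpectedCount N) (2 * ginOEDensity N b) b := by
  refine (((hasDerivAt_sum_regP_nat_add_half (by positivity) hb (N - 1)).add
    (hasDerivAt_regP_half_natCast_mul_sq_div_two (by omega) hb)).sub
    (hasDerivAt_sum_regP_half_add_nat (by omega) hb ((N - 3) / 2 + 1))).congr_deriv ?_
  rw [ginOEDensity_of_odd hN hodd, abs_of_pos hb]
  ring

theorem continuous_ginOEExpectedCount {N : ℕ} (hN : 0 < N) :
    Continuous (ginOEExpectedCount N) := by
  unfold ginOEExpectedCount
  fun_prop (disch := positivity)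

theorem ginOEExpectedCount_zero (N : ℕ) : ginOEExpectedCount N 0 = 0 := by
  simp [ginOEExpectedCount, regP_zero]

theorem expected_number_real_eigenvalues_GinOE_odd
    (N : ℕ) (hN : 3 ≤ N) (hodd : Odd N) (a : ℝ) (ha : 0 ≤ a) :
    (∫ x in (-a)..a,
        (Real.sqrt (N / (2 * π)) * regQ (N - 1) (N * x ^ 2)
          + (N : ℝ) ^ ((N : ℝ) / 2) / ((2 : ℝ) ^ ((N : ℝ) / 2) * Real.Gamma (N / 2))
            * Real.exp (-(N * x ^ 2) / 2) * |x| ^ (N - 1)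
            * regP ((N - 1) / 2) (N * x ^ 2 / 2)))
      = (1 / Real.sqrt 2) * ∑ k ∈ Finset.range (N - 1),
            (Nat.doubleFactorial (2 * k - 1) : ℝ) / (Nat.doubleFactorial (2 * k) : ℝ)
              * regP (k + 1 / 2) (N * a ^ 2)
        + regP ((N : ℝ) / 2) (N * a ^ 2 / 2)
        - (1 / ((2 : ℝ) ^ ((N : ℝ) / 2) * (Nat.doubleFactorial (N - 2) : ℝ)))
          * ∑ k ∈ Finset.range ((N - 3) / 2 + 1),
              (Nat.doubleFactorial (N + 2 * k - 2) : ℝ)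
                / ((2 : ℝ) ^ k * (Nat.doubleFactorial (2 * k) : ℝ))
                * regP ((N : ℝ) / 2 + k) (N * a ^ 2) := by
  change ∫ x in (-a)..a, ginOEDensity N x = ginOEExpectedCount N a
  have hdensity := continuous_ginOEDensity (by omega : 2 ≤ N)
  rw [integral_symm_interval_of_even (ginOEDensity_neg N) (hdensity.intervalIntegrable _ _),
    ← intervalIntegral.integral_const_mul, integral_eq_sub_of_hasDerivAt_of_le ha
      (continuous_ginOEExpectedCount (by omega)).continuousOn
      (fun b hb => hasDerivAt_ginOEExpectedCount hN hodd hb.1)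
      ((continuous_const.mul hdensity).intervalIntegrable _ _),
    ginOEExpectedCount_zero, sub_zero]
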